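/- Suppose a monic polynomial family {P_u} in ℝ⟨x₁,…,xₙ⟩ satisfies the recursion x_i P_u = P_{(i,u)} + Σ_{|w|=|u|} B_{i,w,u} P_w + Σ_{|v|=|u|-1} C_{i,v,u} P_v with (a) C_{i,s,u} = 0 unless u = (i,s) and C_{i,s,(i,s)} > 0, and (b) B_{i,s,u} ∏_{j=1}^k C_{s(j), s_{j+1}, s_j} = B_{i,u,s} ∏_{j=1}^k C_{u(j), u_{j+1}, u_j} for all words s, u of equal length k. Then there exists a unique faithful state φ on ℝ⟨x₁,…,xₙ⟩ making {P_u} orthogonal, namely the functional determined by φ(P_u* P_v) = δ_{uv} ∏_{j=1}^k C_{u(j), u_{j+1}, u_j}. -/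

import Mathlib

/-- The monomial `x_{u(1)} ⋯ x_{u(k)}` in the free algebra `ℝ⟨x₁,…,xₙ⟩`. -/
noncomputable def mono {n : ℕ} (u : List (Fin n)) : FreeAlgebra ℝ (Fin n) :=
  (u.map (FreeAlgebra.ι ℝ)).prod

/-- The span of monomials of length (degree) `< k`: "lower-order terms". -/
noncomputable def lowerOrder (n k : ℕ) : Submodule ℝ (FreeAlgebra ℝ (Fin n)) :=
  Submodule.span ℝ {m | ∃ v : List (Fin n), v.length < k ∧ m = mono v}

/-- The monomial-reversing involution `*` on `ℝ⟨x₁,…,xₙ⟩`. -/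
noncomputable def ncStar {n : ℕ} (P : FreeAlgebra ℝ (Fin n)) : FreeAlgebra ℝ (Fin n) :=
  MulOpposite.unop
    (FreeAlgebra.lift ℝ (fun i => MulOpposite.op (FreeAlgebra.ι ℝ i)) P)

/-- A monic polynomial family: `P_∅ = 1` and `P_u = x_u + lower-order terms`. -/
def IsMonicFamily {n : ℕ} (P : List (Fin n) → FreeAlgebra ℝ (Fin n)) : Prop :=
  P [] = 1 ∧ ∀ u : List (Fin n), P u - mono u ∈ lowerOrder n u.length

/-- `∏_{j=1}^{k} C_{u(j), u_{j+1}, u_j}` over the suffixes `u_j = (u(j),…,u(k))` of `u`. -/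
def suffixProd {n : ℕ} (C : Fin n → List (Fin n) → List (Fin n) → ℝ) :
    List (Fin n) → ℝ
  | [] => 1
  | (a :: t) => C a t (a :: t) * suffixProd C t

lemma equiv_mono {n : ℕ} (w : List (Fin n)) :
    FreeAlgebra.equivMonoidAlgebraFreeMonoid (mono w)
      = MonoidAlgebra.single (FreeMonoid.ofList w) (1:ℝ) := by
  induction w with
  | nil => simp [mono]; rfl
  | cons a t ih =>
    have : mono (a :: t) = FreeAlgebra.ι ℝ a * mono t := by simp [mono]
    rw [this, map_mul, ih]
    have h1 : FreeAlgebra.equivMonoidAlgebraFreeMonoid (FreeAlgebra.ι ℝ a)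
        = MonoidAlgebra.single (FreeMonoid.of a) (1:ℝ) := by
      simp [FreeAlgebra.equivMonoidAlgebraFreeMonoid]
    rw [h1, MonoidAlgebra.single_mul_single, one_mul]
    rfl

lemma basis_mono {n : ℕ} (w : List (Fin n)) :
    FreeAlgebra.basisFreeMonoid ℝ (Fin n) (FreeMonoid.ofList w) = mono w := by
  rw [FreeAlgebra.basisFreeMonoid]
  simp only [Module.Basis.map_apply]
  have : (Finsupp.basisSingleOne (R := ℝ) (ι := FreeMonoid (Fin n))) (FreeMonoid.ofList w)
      = (MonoidAlgebra.single (FreeMonoid.ofList w) (1:ℝ)).coeff := rfl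
  rw [this, ← equiv_mono]
  exact FreeAlgebra.equivMonoidAlgebraFreeMonoid.symm_apply_apply _

/-- coefficient of the monomial `u` -/
noncomputable def cf {n : ℕ} (u : List (Fin n)) : FreeAlgebra ℝ (Fin n) →ₗ[ℝ] ℝ :=
  (FreeAlgebra.basisFreeMonoid ℝ (Fin n)).coord (FreeMonoid.ofList u)

lemma cf_mono {n : ℕ} (u v : List (Fin n)) :
    cf u (mono v) = if u = v then 1 else 0 := by
  rw [cf, ← basis_mono, Module.Basis.coord_apply, Module.Basis.repr_self]
  by_cases h : u = v
  · subst h; simp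
  · rw [if_neg h, Finsupp.single_eq_of_ne (fun e => h (FreeMonoid.ofList.injective e))]

lemma cf_lower {n : ℕ} {k : ℕ} (u : List (Fin n)) (hk : k ≤ u.length)
    {x : FreeAlgebra ℝ (Fin n)} (hx : x ∈ lowerOrder n k) : cf u x = 0 := by
  have hle : lowerOrder n k ≤ LinearMap.ker (cf u) := by
    rw [lowerOrder, Submodule.span_le]
    rintro m ⟨v, hv, rfl⟩
    simp only [SetLike.mem_coe, LinearMap.mem_ker]
    rw [cf_mono, if_neg]
    intro h; subst h; omega
  exact hle hx

lemma cf_P {n : ℕ} {P : List (Fin n) → FreeAlgebra ℝ (Fin n)} (hP : IsMonicFamily P)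
    {u v : List (Fin n)} (h : v.length ≤ u.length) :
    cf u (P v) = if u = v then 1 else 0 := by
  have : P v = mono v + (P v - mono v) := by abel
  rw [this, map_add, cf_mono, cf_lower u h (hP.2 v), add_zero]

lemma mono_mem_span {n : ℕ} {P : List (Fin n) → FreeAlgebra ℝ (Fin n)} (hP : IsMonicFamily P)
    (v : List (Fin n)) : mono v ∈ Submodule.span ℝ (Set.range P) := by
  have H : ∀ k (v : List (Fin n)), v.length < k → mono v ∈ Submodule.span ℝ (Set.range P) := by
    intro k
    induction k with
    | zero => intro v hv; omega
    | succ k ih =>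
      intro v hv
      have h1 : mono v = P v - (P v - mono v) := by abel
      rw [h1]
      apply sub_mem (Submodule.subset_span (Set.mem_range_self v))
      have : lowerOrder n v.length ≤ Submodule.span ℝ (Set.range P) := by
        rw [lowerOrder, Submodule.span_le]
        rintro m ⟨w, hw, rfl⟩
        exact ih w (by omega)
      exact this (hP.2 v)
  exact H (v.length + 1) v (by omega)

lemma span_P_top {n : ℕ} {P : List (Fin n) → FreeAlgebra ℝ (Fin n)} (hP : IsMonicFamily P) :
    ⊤ ≤ Submodule.span ℝ (Set.range P) := by
  rw [← (FreeAlgebra.basisFreeMonoid ℝ (Fin n)).span_eq]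
  rw [Submodule.span_le]
  rintro x ⟨w, rfl⟩
  rw [show w = FreeMonoid.ofList (FreeMonoid.toList w) from rfl, basis_mono]
  exact mono_mem_span hP _

lemma indep_P {n : ℕ} {P : List (Fin n) → FreeAlgebra ℝ (Fin n)} (hP : IsMonicFamily P) :
    LinearIndependent ℝ P := by
  rw [linearIndependent_iff']
  intro s g hrel
  suffices H : ∀ k (s : Finset (List (Fin n))), (∀ v ∈ s, v.length < k) →
      (∑ i ∈ s, g i • P i = 0) → ∀ i ∈ s, g i = 0 by
    refine H ((s.sup List.length) + 1) s (fun v hv => ?_) hrel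
    exact Nat.lt_succ_of_le (Finset.le_sup hv)
  intro k
  induction k with
  | zero => intro s hs _ i hi; exact absurd (hs i hi) (by omega)
  | succ k ih =>
    intro s hs hrel
    have step1 : ∀ u ∈ s, u.length = k → g u = 0 := by
      intro u hu hlen
      have := congrArg (cf u) hrel
      rw [map_sum, map_zero] at this
      have heq : ∀ v ∈ s, cf u (g v • P v) = if u = v then g v else 0 := by
        intro v hv
        rw [map_smul, cf_P hP (by have := hs v hv; omega)]
        by_cases h : u = v <;> simp [h]
      rw [Finset.sum_congr rfl heq, Finset.sum_ite_eq s u g] at this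
      rwa [if_pos hu] at this
    have step2 : ∑ i ∈ s.filter (fun v => v.length < k), g i • P i = 0 := by
      rw [← Finset.sum_filter_add_sum_filter_not s (fun v => v.length < k) (fun i => g i • P i)]
        at hrel
      have : ∑ i ∈ s.filter (fun v => ¬ v.length < k), g i • P i = 0 := by
        apply Finset.sum_eq_zero
        intro v hv
        rw [Finset.mem_filter] at hv
        rw [step1 v hv.1 (by have := hs v hv.1; omega), zero_smul]
      rw [this, add_zero] at hrel
      exact hrel
    intro i hi
    by_cases h : i.length < k
    · exact ih _ (fun v hv => (Finset.mem_filter.mp hv).2) step2 i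
        (Finset.mem_filter.mpr ⟨hi, h⟩)
    · exact step1 i hi (by have := hs i hi; omega)


noncomputable def ncStarL {n : ℕ} : FreeAlgebra ℝ (Fin n) →ₗ[ℝ] FreeAlgebra ℝ (Fin n) :=
  ((MulOpposite.opLinearEquiv ℝ).symm.toLinearMap).comp
    (FreeAlgebra.lift ℝ (fun i => MulOpposite.op (FreeAlgebra.ι ℝ i))).toLinearMap

lemma ncStar_mul {n : ℕ} (a b : FreeAlgebra ℝ (Fin n)) :
    ncStar (a * b) = ncStar b * ncStar a := by simp [ncStar, map_mul]

lemma ncStar_one {n : ℕ} : ncStar (1 : FreeAlgebra ℝ (Fin n)) = 1 := by simp [ncStar]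

lemma ncStar_iota {n : ℕ} (i : Fin n) : ncStar (FreeAlgebra.ι ℝ i) = FreeAlgebra.ι ℝ i := by
  simp [ncStar]

lemma ncStar_sub {n : ℕ} (a b : FreeAlgebra ℝ (Fin n)) :
    ncStar (a - b) = ncStar a - ncStar b := map_sub (ncStarL (n := n)) a b

lemma ncStar_smul {n : ℕ} (r : ℝ) (a : FreeAlgebra ℝ (Fin n)) :
    ncStar (r • a) = r • ncStar a := map_smul (ncStarL (n := n)) r a

lemma ncStar_sum {n : ℕ} {ι : Type*} (s : Finset ι) (f : ι → FreeAlgebra ℝ (Fin n)) :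
    ncStar (∑ i ∈ s, f i) = ∑ i ∈ s, ncStar (f i) := map_sum (ncStarL (n := n)) f s

lemma sum_vector_eq {n : ℕ} (m : ℕ) (g : List (Fin n) → ℝ) (s : List (Fin n))
    (h0 : ∀ w : List.Vector (Fin n) m, w.toList ≠ s → g w.toList = 0) :
    ∑ w : List.Vector (Fin n) m, g w.toList = if s.length = m then g s else 0 := by
  by_cases h : s.length = m
  · rw [if_pos h]
    have : List.Vector.toList (Subtype.mk s h) = s := List.Vector.toList_mk s h
    rw [← this]
    apply Fintype.sum_eq_single
    intro w hw
    apply h0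
    intro e
    apply hw
    apply List.Vector.eq
    rw [e]; rfl
  · rw [if_neg h]
    apply Finset.sum_eq_zero
    intro w _
    apply h0
    intro e
    apply h
    rw [← e, List.Vector.toList_length]

lemma key {n : ℕ}
    (P : List (Fin n) → FreeAlgebra ℝ (Fin n)) (hP1 : P [] = 1)
    (B C : Fin n → List (Fin n) → List (Fin n) → ℝ)
    (hCzero : ∀ (i : Fin n) (s u : List (Fin n)), u ≠ i :: s → C i s u = 0)
    (hB : ∀ (i : Fin n) (s u : List (Fin n)), s.length = u.length →
      B i s u * suffixProd C s = B i u s * suffixProd C u)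
    (hrec : ∀ (i : Fin n) (u : List (Fin n)),
      FreeAlgebra.ι ℝ i * P u
        = P (i :: u)
          + (∑ w : List.Vector (Fin n) u.length, B i w.toList u • P w.toList)
          + (∑ v : List.Vector (Fin n) (u.length - 1), C i v.toList u • P v.toList))
    (φ : FreeAlgebra ℝ (Fin n) →ₗ[ℝ] ℝ)
    (hφ : ∀ u : List (Fin n), φ (P u) = if u = [] then 1 else 0) :
    ∀ (k : ℕ) (u : List (Fin n)), u.length = k → ∀ v : List (Fin n),
      φ (ncStar (P u) * P v) = if u = v then suffixProd C u else 0 := by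
  intro k
  induction k using Nat.strong_induction_on with
  | _ k IH =>
    intro u hu v
    cases u with
    | nil =>
      rw [hP1, ncStar_one, one_mul, hφ]
      by_cases hv : v = []
      · subst hv; simp [suffixProd]
      · rw [if_neg hv, if_neg (fun e => hv e.symm)]
    | cons i s =>
      have hsk : s.length + 1 = k := by simpa using hu
      have hPis : P (i :: s)
          = FreeAlgebra.ι ℝ i * P s
            - (∑ w : List.Vector (Fin n) s.length, B i w.toList s • P w.toList)
            - (∑ w : List.Vector (Fin n) (s.length - 1), C i w.toList s • P w.toList) := by
        rw [hrec i s]; abel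
      rw [hPis, ncStar_sub, ncStar_sub, ncStar_mul, ncStar_iota, ncStar_sum, ncStar_sum]
      simp only [ncStar_smul]
      rw [sub_mul, sub_mul, map_sub, map_sub, mul_assoc, hrec i v, mul_add, mul_add,
        map_add, map_add, Finset.mul_sum, Finset.mul_sum, Finset.sum_mul, Finset.sum_mul]
      simp only [mul_smul_comm, smul_mul_assoc, map_sum, map_smul, smul_eq_mul]
      have IHs : ∀ t, φ (ncStar (P s) * P t) = if s = t then suffixProd C s else 0 :=
        fun t => IH s.length (by omega) s rfl t
      have IHB : ∀ w : List.Vector (Fin n) s.length,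
          φ (ncStar (P w.toList) * P v) = if w.toList = v then suffixProd C w.toList else 0 :=
        fun w => IH w.toList.length (by rw [List.Vector.toList_length]; omega) w.toList rfl v
      have IHC : ∀ w : List.Vector (Fin n) (s.length - 1),
          φ (ncStar (P w.toList) * P v) = if w.toList = v then suffixProd C w.toList else 0 :=
        fun w => IH w.toList.length (by rw [List.Vector.toList_length]; omega) w.toList rfl v
      simp only [IHs, IHB, IHC]
      have E2 : ∑ w : List.Vector (Fin n) v.length,
          B i w.toList v * (if s = w.toList then suffixProd C s else 0)
          = if s.length = v.length then B i s v * suffixProd C s else 0 := by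
        have := sum_vector_eq (n := n) v.length
          (fun l => B i l v * (if s = l then suffixProd C s else 0)) s
          (by intro w hw; rw [if_neg (fun e => hw e.symm), mul_zero])
        simpa using this
      have E3 : ∑ w : List.Vector (Fin n) (v.length - 1),
          C i w.toList v * (if s = w.toList then suffixProd C s else 0)
          = if s.length = v.length - 1 then C i s v * suffixProd C s else 0 := by
        have := sum_vector_eq (n := n) (v.length - 1)
          (fun l => C i l v * (if s = l then suffixProd C s else 0)) s
          (by intro w hw; rw [if_neg (fun e => hw e.symm), mul_zero])
        simpa using this
      have E4 : ∑ w : List.Vector (Fin n) s.length,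
          B i w.toList s * (if w.toList = v then suffixProd C w.toList else 0)
          = if v.length = s.length then B i v s * suffixProd C v else 0 := by
        have := sum_vector_eq (n := n) s.length
          (fun l => B i l s * (if l = v then suffixProd C l else 0)) v
          (by intro w hw; rw [if_neg hw, mul_zero])
        simpa using this
      have E5 : ∑ w : List.Vector (Fin n) (s.length - 1),
          C i w.toList s * (if w.toList = v then suffixProd C w.toList else 0)
          = if v.length = s.length - 1 then C i v s * suffixProd C v else 0 := by
        have := sum_vector_eq (n := n) (s.length - 1)
          (fun l => C i l s * (if l = v then suffixProd C l else 0)) v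
          (by intro w hw; rw [if_neg hw, mul_zero])
        simpa using this
      rw [E2, E3, E4, E5]
      have neq1 : ∀ (a : List (Fin n)) (j : Fin n) (b : List (Fin n)),
          a.length ≠ b.length + 1 → ¬ a = j :: b := by
        intro a j b hab e; apply hab; rw [e]; simp
      have neq2 : ∀ (j : Fin n) (a b : List (Fin n)),
          a.length + 1 ≠ b.length → ¬ j :: a = b := by
        intro j a b hab e; apply hab; rw [← e]; simp
      by_cases h1 : v.length = s.length + 1
      · rw [if_neg (neq1 s i v (by omega)), if_pos (by omega : s.length = v.length - 1),
          if_neg (by omega : ¬ s.length = v.length),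
          if_neg (by omega : ¬ v.length = s.length),
          if_neg (by omega : ¬ v.length = s.length - 1)]
        by_cases hv : v = i :: s
        · subst hv; rw [if_pos rfl]
          simp only [suffixProd]; ring
        · rw [hCzero i s v hv, if_neg (fun e => hv e.symm)]; ring
      · by_cases h2 : v.length = s.length
        · rw [if_neg (neq1 s i v (by omega)), if_pos h2.symm, if_pos h2,
            if_neg (neq2 i s v (by omega))]
          have hT3 : (if s.length = v.length - 1 then C i s v * suffixProd C s else 0) = 0 := by
            by_cases h : s.length = v.length - 1
            · rw [if_pos h, hCzero i s v (by intro e; apply_fun List.length at e; simp at e; omega),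
                zero_mul]
            · rw [if_neg h]
          rw [hT3]
          have := hB i s v h2.symm
          have hT5 : (if v.length = s.length - 1 then C i v s * suffixProd C v else 0) = 0 := by
            by_cases h : v.length = s.length - 1
            · rw [if_pos h, hCzero i v s (by intro e; apply_fun List.length at e; simp at e; omega),
                zero_mul]
            · rw [if_neg h]
          rw [hT5]
          linarith
        · by_cases h3 : s.length = v.length + 1
          · rw [if_neg (by omega : ¬ s.length = v.length),
              if_neg (by omega : ¬ s.length = v.length - 1),
              if_neg (by omega : ¬ v.length = s.length),
              if_pos (by omega : v.length = s.length - 1),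
              if_neg (neq2 i s v (by omega))]
            by_cases hs : s = i :: v
            · subst hs; rw [if_pos rfl]
              simp only [suffixProd]; ring
            · rw [if_neg hs, hCzero i v s hs]; ring
          · rw [if_neg (neq1 s i v (by omega)),
              if_neg (by omega : ¬ s.length = v.length),
              if_neg (by omega : ¬ s.length = v.length - 1),
              if_neg (by omega : ¬ v.length = s.length),
              if_neg (by omega : ¬ v.length = s.length - 1),
              if_neg (neq2 i s v (by omega))]
            ring

/-- Favard-type theorem, converse direction: a monic family satisfying the
recursion with conditions (a) and (b) is orthogonal with respect to a unique faithful state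
`φ`, determined by `φ(P_u* P_v) = δ_{uv} ∏_{j=1}^k C_{u(j), u_{j+1}, u_j}`. -/
theorem recursion_implies_orthogonal (n : ℕ)
    (P : List (Fin n) → FreeAlgebra ℝ (Fin n)) (hP : IsMonicFamily P)
    (B C : Fin n → List (Fin n) → List (Fin n) → ℝ)
    (hCzero : ∀ (i : Fin n) (s u : List (Fin n)), u ≠ i :: s → C i s u = 0)
    (hCpos : ∀ (i : Fin n) (s : List (Fin n)), 0 < C i s (i :: s))
    (hB : ∀ (i : Fin n) (s u : List (Fin n)), s.length = u.length →
      B i s u * suffixProd C s = B i u s * suffixProd C u)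
    (hrec : ∀ (i : Fin n) (u : List (Fin n)),
      FreeAlgebra.ι ℝ i * P u
        = P (i :: u)
          + (∑ w : List.Vector (Fin n) u.length, B i w.toList u • P w.toList)
          + (∑ v : List.Vector (Fin n) (u.length - 1), C i v.toList u • P v.toList)) :
    ∃! φ : FreeAlgebra ℝ (Fin n) →ₗ[ℝ] ℝ,
      φ 1 = 1
      ∧ (∀ A : FreeAlgebra ℝ (Fin n), 0 ≤ φ (ncStar A * A))
      ∧ (∀ A : FreeAlgebra ℝ (Fin n), φ (ncStar A * A) = 0 → A = 0)
      ∧ (∀ u v : List (Fin n), u ≠ v → φ (ncStar (P u) * P v) = 0)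
      ∧ (∀ u : List (Fin n), φ (ncStar (P u) * P u) = suffixProd C u) := by
  classical
  have hP1 := hP.1
  let Pb : Module.Basis (List (Fin n)) ℝ (FreeAlgebra ℝ (Fin n)) :=
    Module.Basis.mk (indep_P hP) (span_P_top hP)
  have hPbApply : ∀ u : List (Fin n), Pb u = P u := fun u => Module.Basis.mk_apply _ _ u
  set φ : FreeAlgebra ℝ (Fin n) →ₗ[ℝ] ℝ := Pb.coord [] with hφdef
  have hφP : ∀ u : List (Fin n), φ (P u) = if u = [] then 1 else 0 := by
    intro u
    rw [hφdef, Module.Basis.coord_apply, ← hPbApply u, Module.Basis.repr_self, Finsupp.single_apply]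
  have hγ : ∀ u : List (Fin n), 0 < suffixProd C u := by
    intro u
    induction u with
    | nil => norm_num [suffixProd]
    | cons a t ih => exact mul_pos (hCpos a t) ih
  have K : ∀ u v : List (Fin n), φ (ncStar (P u) * P v) = if u = v then suffixProd C u else 0 :=
    fun u v => key P hP1 B C hCzero hB hrec φ hφP u.length u rfl v
  have expand : ∀ A : FreeAlgebra ℝ (Fin n),
      φ (ncStar A * A) = ∑ u ∈ (Pb.repr A).support, (Pb.repr A u)^2 * suffixProd C u := by
    intro A
    have hA : A = ∑ u ∈ (Pb.repr A).support, (Pb.repr A u) • P u := by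
      conv_lhs => rw [← Pb.linearCombination_repr A]
      rw [Finsupp.linearCombination_apply, Finsupp.sum]
      exact Finset.sum_congr rfl (fun u _ => by rw [hPbApply u])
    conv_lhs => rw [hA]
    rw [ncStar_sum, Finset.sum_mul_sum]
    simp only [ncStar_smul, smul_mul_smul_comm, map_sum, map_smul, smul_eq_mul, K]
    rw [Finset.sum_congr rfl (fun u hu => ?_)]
    have : ∀ v ∈ (Pb.repr A).support,
        Pb.repr A u * Pb.repr A v * (if u = v then suffixProd C u else 0)
          = if u = v then Pb.repr A u * Pb.repr A v * suffixProd C u else 0 := by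
      intro v _
      by_cases h : u = v <;> simp [h]
    rw [Finset.sum_congr rfl this]
    have := Finset.sum_ite_eq (Pb.repr A).support u
      (fun v => Pb.repr A u * Pb.repr A v * suffixProd C u)
    rw [this, if_pos hu]
    ring
  refine ⟨φ, ⟨?_, ?_, ?_, ?_, ?_⟩, ?_⟩
  · rw [← hP1, hφP]; simp
  · intro A
    rw [expand A]
    apply Finset.sum_nonneg
    intro u _
    exact mul_nonneg (sq_nonneg _) (le_of_lt (hγ u))
  · intro A hA0
    rw [expand A] at hA0
    have hz : ∀ u ∈ (Pb.repr A).support, (Pb.repr A u)^2 * suffixProd C u = 0 := by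
      rw [← Finset.sum_eq_zero_iff_of_nonneg
        (fun u _ => mul_nonneg (sq_nonneg _) (le_of_lt (hγ u)))]
      exact hA0
    have hsupp : (Pb.repr A).support = ∅ := by
      by_contra h
      obtain ⟨u, hu⟩ := Finset.nonempty_iff_ne_empty.mpr h
      have h1 : Pb.repr A u ≠ 0 := Finsupp.mem_support_iff.mp hu
      have h2 := hz u hu
      have h3 : (Pb.repr A u)^2 = 0 := by
        rcases mul_eq_zero.mp h2 with h | h
        · exact h
        · exact absurd h (ne_of_gt (hγ u))
      exact h1 (pow_eq_zero_iff (by norm_num) |>.mp h3)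
    have : Pb.repr A = 0 := Finsupp.support_eq_empty.mp hsupp
    have := congrArg Pb.repr.symm this
    rwa [LinearEquiv.symm_apply_apply, map_zero] at this
  · intro u v huv
    rw [K, if_neg huv]
  · intro u
    rw [K, if_pos rfl]
  · intro ψ ⟨h1, _, _, h4, h5⟩
    apply Pb.ext
    intro u
    rw [hPbApply u, hφP u]
    by_cases hu : u = []
    · subst hu; rw [hP1, h1, if_pos rfl]
    · rw [if_neg hu]
      have := h4 [] u (fun e => hu e.symm)
      rwa [hP1, ncStar_one, one_mul] at this
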